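/- arXiv:1501.02458 — 4 statements merged into one kernel-verified Lean document; each statement's English description precedes it below -/
import Mathlib

section
/- Consider a sequence of heterogeneity-model problems indexed by k with M fixed: dimensions p_k, supports S_{m,k} = {j : β_j^{m*}(k) ≠ 0}, sample sizes n_{m,k} with n_k = ∑_m n_{m,k} → ∞, designs, weights, and errors satisfying Condition 1(a) with fixed σ_m > 0. Assume there are constants 0 < c ≤ C < ∞ such that c ≤ ρ₁^{*m,k} and ρ̄₂^{*m,k} ≤ C for all m,k, that n_k/n_{m,k} ≤ C, and that |S_k|/n_k → 0 where S_k = ∪_m S_{m,k}. Then the oracle estimators satisfy ‖β̌_{S_m}^m − β_{S_m}^{m*}‖₂ = O_p(√(|S_{m,k}|/n_{m,k})); that is, for every δ > 0 there exist a constant C' and an index K such that for all k ≥ K, P(there exists m with ‖β̌_{S_m}^m − β_{S_m}^{m*}‖₂ > C' √(|S_{m,k}|/n_{m,k})) ≤ δ. (Corollary 3.) -/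
open MeasureTheory Matrix Finset Real Filter Topology

noncomputable section

/-- Rayleigh-quotient characterization of the smallest eigenvalue of a symmetric matrix. -/
def lmin {ι : Type*} [Fintype ι] (A : Matrix ι ι ℝ) : ℝ :=
  sInf {r : ℝ | ∃ v : ι → ℝ, (∑ i, v i ^ 2) = 1 ∧ r = v ⬝ᵥ A *ᵥ v}

/-- Rayleigh-quotient characterization of the largest eigenvalue of a symmetric matrix. -/
def lmax {ι : Type*} [Fintype ι] (A : Matrix ι ι ℝ) : ℝ :=
  sSup {r : ℝ | ∃ v : ι → ℝ, (∑ i, v i ^ 2) = 1 ∧ r = v ⬝ᵥ A *ᵥ v}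

/-- Condition 1(a): sub-Gaussian error vector with noise level σ. -/
def SubG {Ω : Type*} [MeasurableSpace Ω] (P : Measure Ω) {d : ℕ}
    (ε : Ω → Fin d → ℝ) (σ : ℝ) : Prop :=
  ∀ ν : Fin d → ℝ, (∑ i, ν i ^ 2) = 1 → ∀ t : ℝ, 0 ≤ t →
    P {ω | t ≤ |ν ⬝ᵥ ε ω|} ≤ ENNReal.ofReal (2 * Real.exp (-t ^ 2 / (2 * σ ^ 2)))

/-- Submatrix of the columns indexed by a finite set `S`. -/
def colSub {d p : ℕ} (A : Matrix (Fin d) (Fin p) ℝ) (S : Finset (Fin p)) :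
    Matrix (Fin d) {j // j ∈ S} ℝ := A.submatrix id (fun j => (j : Fin p))

/-!
On each dataset the oracle is a weighted least-squares fit on the true support, so its normal
equations read `(Xᵀ W X)(β̌ - β*) = Xᵀ W ε`. The eigenvalue bound `ρ₁ ≥ c` turns this into
`(n c)² ‖β̌ - β*‖² ≤ ‖Xᵀ W ε‖² = ∑ⱼ ⟨W Xⱼ, ε⟩²`, and `ρ̄₂ ≤ C` bounds `‖W Xⱼ‖² ≤ n C`, so each
`⟨W Xⱼ, ε⟩²` has sub-exponential tails at scale `2 n C σ²` and (upper) mean at most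
`1 + 4 n C σ²`. Markov's inequality for the sum over the `|S_m|` coordinates bounds the
probability that `‖β̌ - β*‖² > C'² |S_m| / n` by `(1 + 4 C σ²) / (c C')²`, whatever `k` is,
and a union bound over the `M` datasets finishes the proof.
-/

open scoped ENNReal

section Rayleigh

variable {ι : Type*} [Fintype ι]

theorem eq_zero_or_sum_sq_pos (v : ι → ℝ) : v = 0 ∨ 0 < ∑ i, v i ^ 2 := by
  by_cases hv : v = 0
  · exact Or.inl hv
  · obtain ⟨i, hi⟩ := Function.ne_iff.1 hv
    have hi : v i ≠ 0 := hi
    exact Or.inr (sum_pos' (fun j _ => sq_nonneg (v j)) ⟨i, mem_univ i, by positivity⟩)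

theorem sum_sq_inv_sqrt_smul_eq_one {v : ι → ℝ} (hv : 0 < ∑ i, v i ^ 2) :
    ∑ i, ((√(∑ i, v i ^ 2))⁻¹ • v) i ^ 2 = 1 := by
  simp only [Pi.smul_apply, smul_eq_mul, mul_pow, ← mul_sum, inv_pow, sq_sqrt hv.le]
  exact inv_mul_cancel₀ hv.ne'

theorem abs_le_one_of_sum_sq_eq_one {v : ι → ℝ} (hv : ∑ i, v i ^ 2 = 1) (i : ι) : |v i| ≤ 1 := by
  rw [← sq_le_one_iff_abs_le_one, ← hv]
  exact single_le_sum (f := fun j => v j ^ 2) (fun j _ => sq_nonneg (v j)) (mem_univ i)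

theorem abs_dotProduct_mulVec_le (A : Matrix ι ι ℝ) {v : ι → ℝ} (hv : ∑ i, v i ^ 2 = 1) :
    |v ⬝ᵥ A *ᵥ v| ≤ ∑ i, ∑ j, |A i j| := by
  have h1 := abs_le_one_of_sum_sq_eq_one hv
  calc |v ⬝ᵥ A *ᵥ v| = |∑ i, ∑ j, v i * A i j * v j| := by
        simp only [dotProduct, mulVec, mul_sum, mul_assoc]
    _ ≤ ∑ i, ∑ j, |v i * A i j * v j| :=
        (abs_sum_le_sum_abs _ _).trans (sum_le_sum fun i _ => abs_sum_le_sum_abs _ _)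
    _ ≤ ∑ i, ∑ j, |A i j| := by
        refine sum_le_sum fun i _ => sum_le_sum fun j _ => ?_
        calc |v i * A i j * v j| = |v i| * |A i j| * |v j| := by rw [abs_mul, abs_mul]
          _ ≤ 1 * |A i j| * 1 := by gcongr <;> exact h1 _
          _ = |A i j| := by ring

theorem bddBelow_rayleigh (A : Matrix ι ι ℝ) :
    BddBelow {r : ℝ | ∃ v : ι → ℝ, (∑ i, v i ^ 2) = 1 ∧ r = v ⬝ᵥ A *ᵥ v} :=
  ⟨-∑ i, ∑ j, |A i j|, by
    rintro _ ⟨v, hv, rfl⟩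
    exact neg_le_of_abs_le (abs_dotProduct_mulVec_le A hv)⟩

theorem bddAbove_rayleigh (A : Matrix ι ι ℝ) :
    BddAbove {r : ℝ | ∃ v : ι → ℝ, (∑ i, v i ^ 2) = 1 ∧ r = v ⬝ᵥ A *ᵥ v} :=
  ⟨∑ i, ∑ j, |A i j|, by
    rintro _ ⟨v, hv, rfl⟩
    exact le_of_abs_le (abs_dotProduct_mulVec_le A hv)⟩

theorem lmin_mul_sum_sq_le (A : Matrix ι ι ℝ) (v : ι → ℝ) :
    lmin A * ∑ i, v i ^ 2 ≤ v ⬝ᵥ A *ᵥ v := by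
  rcases eq_zero_or_sum_sq_pos v with rfl | hv
  · simp
  set q := √(∑ i, v i ^ 2)
  have hq : 0 < q := sqrt_pos.2 hv
  have hle : lmin A ≤ (q⁻¹ • v) ⬝ᵥ A *ᵥ (q⁻¹ • v) :=
    csInf_le (bddBelow_rayleigh A) ⟨_, sum_sq_inv_sqrt_smul_eq_one hv, rfl⟩
  rw [mulVec_smul, smul_dotProduct, dotProduct_smul, smul_eq_mul, smul_eq_mul] at hle
  calc lmin A * ∑ i, v i ^ 2 = lmin A * q ^ 2 := by rw [sq_sqrt hv.le]
    _ ≤ q⁻¹ * (q⁻¹ * (v ⬝ᵥ A *ᵥ v)) * q ^ 2 := by gcongr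
    _ = v ⬝ᵥ A *ᵥ v := by field_simp

theorem diag_le_lmax (A : Matrix ι ι ℝ) (j : ι) : A j j ≤ lmax A := by
  classical
  have hj : ∑ i, (Pi.single j 1 : ι → ℝ) i ^ 2 = 1 := by
    rw [sum_eq_single j (fun i _ hi => by simp [hi]) (by simp)]
    simp
  have := le_csSup (bddAbove_rayleigh A) ⟨_, hj, rfl⟩
  rwa [mulVec_single_one, single_dotProduct, one_mul] at this

theorem nonempty_of_lmin_pos {A : Matrix ι ι ℝ} (h : 0 < lmin A) : Nonempty ι := by
  by_contra hι
  rw [not_nonempty_iff] at hι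
  simp [lmin] at h

theorem sq_mul_sum_sq_le_sum_sq_mulVec {A : Matrix ι ι ℝ} {κ : ℝ} (hκ : 0 ≤ κ) (h : κ ≤ lmin A)
    (v : ι → ℝ) : κ ^ 2 * ∑ i, v i ^ 2 ≤ ∑ i, (A *ᵥ v) i ^ 2 := by
  set Q := ∑ i, v i ^ 2
  set U := ∑ i, (A *ᵥ v) i ^ 2
  have hQ : 0 ≤ Q := sum_nonneg fun i _ => sq_nonneg (v i)
  have hlow : κ * Q ≤ v ⬝ᵥ A *ᵥ v :=
    (mul_le_mul_of_nonneg_right h hQ).trans (lmin_mul_sum_sq_le A v)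
  have hCS : (v ⬝ᵥ A *ᵥ v) ^ 2 ≤ Q * U := sum_mul_sq_le_sq_mul_sq _ _ _
  have : (κ * Q) ^ 2 ≤ Q * U := (pow_le_pow_left₀ (by positivity) hlow 2).trans hCS
  rcases hQ.eq_or_lt with hQ0 | hQ0
  · rw [← hQ0, mul_zero]
    exact sum_nonneg fun i _ => sq_nonneg _
  · nlinarith

end Rayleigh

theorem eq_zero_of_forall_nonneg_mul_add_mul_sq {a b : ℝ} (h : ∀ t : ℝ, 0 ≤ a * t + b * t ^ 2) :
    a = 0 := by
  have hmin : IsLocalMin (fun t : ℝ => a * t + b * t ^ 2) 0 :=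
    Filter.Eventually.of_forall fun t => by simpa using h t
  have hderiv : HasDerivAt (fun t : ℝ => a * t + b * t ^ 2) a 0 :=
    (((hasDerivAt_id 0).const_mul a).add ((hasDerivAt_pow 2 0).const_mul b)).congr_deriv (by simp)
  exact hmin.hasDerivAt_eq_zero hderiv

section WeightedLeastSquares

variable {κ ι : Type*} [Fintype κ] {X : Matrix κ ι ℝ} {W : Matrix κ κ ℝ}

def weightedRSS [Fintype ι] (X : Matrix κ ι ℝ) (W : Matrix κ κ ℝ) (y : κ → ℝ) (b : ι → ℝ) : ℝ :=
  (y - X *ᵥ b) ⬝ᵥ (W *ᵥ (y - X *ᵥ b))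

theorem dotProduct_mulVec_comm_of_isSymm (hW : W.IsSymm) (x z : κ → ℝ) :
    x ⬝ᵥ W *ᵥ z = (W *ᵥ x) ⬝ᵥ z := by
  rw [dotProduct_mulVec, ← mulVec_transpose, hW.eq]

theorem mulVec_dotProduct_eq_dotProduct_transpose_mulVec [Fintype ι] (g : ι → ℝ) (z : κ → ℝ) :
    (X *ᵥ g) ⬝ᵥ z = g ⬝ᵥ Xᵀ *ᵥ z := by
  rw [dotProduct_comm, dotProduct_mulVec, ← mulVec_transpose, dotProduct_comm]

theorem transpose_mulVec_mulVec_apply (hW : W.IsSymm) (z : κ → ℝ) (j : ι) :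
    (Xᵀ *ᵥ (W *ᵥ z)) j = (W *ᵥ X.col j) ⬝ᵥ z :=
  dotProduct_mulVec_comm_of_isSymm hW (X.col j) z

theorem sum_sq_mulVec_col_eq [Fintype ι] (hW : W.IsSymm) (j : ι) :
    ∑ i, (W *ᵥ X.col j) i ^ 2 = (Xᵀ * W * W * X) j j := by
  classical
  have hcol : (Xᵀ * W * W * X) j j = ((Xᵀ * W * W * X) *ᵥ Pi.single j 1) j := by
    rw [mulVec_single_one, col_apply]
  rw [hcol, ← mulVec_mulVec, ← mulVec_mulVec, ← mulVec_mulVec, mulVec_single_one,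
    transpose_mulVec_mulVec_apply hW]
  simp only [dotProduct, sq]

theorem weightedRSS_add_smul [Fintype ι] (hW : W.IsSymm) (y : κ → ℝ) (b g : ι → ℝ) (t : ℝ) :
    weightedRSS X W y (b + t • g) = weightedRSS X W y b
      - 2 * ((X *ᵥ g) ⬝ᵥ W *ᵥ (y - X *ᵥ b)) * t + ((X *ᵥ g) ⬝ᵥ W *ᵥ (X *ᵥ g)) * t ^ 2 := by
  have hres : y - X *ᵥ (b + t • g) = (y - X *ᵥ b) - t • (X *ᵥ g) := by
    rw [mulVec_add, mulVec_smul]; abel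
  rw [weightedRSS, weightedRSS, hres]
  set r := y - X *ᵥ b
  set z := X *ᵥ g
  have hsymm : r ⬝ᵥ W *ᵥ z = z ⬝ᵥ W *ᵥ r := by
    rw [dotProduct_mulVec_comm_of_isSymm hW, dotProduct_comm]
  simp only [mulVec_sub, mulVec_smul, sub_dotProduct, dotProduct_sub, smul_dotProduct,
    dotProduct_smul, smul_eq_mul, hsymm]
  ring

theorem transpose_mulVec_mulVec_residual_eq_zero [Fintype ι] (hW : W.IsSymm) {y : κ → ℝ}
    {b : ι → ℝ} (hmin : ∀ g, weightedRSS X W y b ≤ weightedRSS X W y g) :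
    Xᵀ *ᵥ (W *ᵥ (y - X *ᵥ b)) = 0 := by
  have horth : ∀ g, (X *ᵥ g) ⬝ᵥ W *ᵥ (y - X *ᵥ b) = 0 := fun g => by
    have := eq_zero_of_forall_nonneg_mul_add_mul_sq (a := -2 * ((X *ᵥ g) ⬝ᵥ W *ᵥ (y - X *ᵥ b)))
      (b := (X *ᵥ g) ⬝ᵥ W *ᵥ (X *ᵥ g)) fun t => by
        have := hmin (b + t • g)
        rw [weightedRSS_add_smul hW] at this
        linarith
    linarith
  have := horth (Xᵀ *ᵥ (W *ᵥ (y - X *ᵥ b)))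
  rwa [mulVec_dotProduct_eq_dotProduct_transpose_mulVec, dotProduct_self_eq_zero] at this

theorem gram_mulVec_sub_eq_of_minimizer [Fintype ι] (hW : W.IsSymm) {β b : ι → ℝ} {e : κ → ℝ}
    (hmin : ∀ g, weightedRSS X W (X *ᵥ β + e) b ≤ weightedRSS X W (X *ᵥ β + e) g) :
    (Xᵀ * W * X) *ᵥ (b - β) = Xᵀ *ᵥ (W *ᵥ e) := by
  have h := transpose_mulVec_mulVec_residual_eq_zero hW hmin
  rw [show X *ᵥ β + e - X *ᵥ b = e - X *ᵥ (b - β) by rw [mulVec_sub]; abel, mulVec_sub,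
    mulVec_sub, sub_eq_zero] at h
  rw [← mulVec_mulVec, ← mulVec_mulVec, h]

end WeightedLeastSquares

section Tails

variable {Ω : Type*} [MeasurableSpace Ω] {P : Measure Ω}

theorem SubG.measure_le_sq_dotProduct {d : ℕ} {ε : Ω → Fin d → ℝ} {σ : ℝ} (hε : SubG P ε σ)
    (hσ : 0 < σ) {w : Fin d → ℝ} {b : ℝ} (hw : ∑ i, w i ^ 2 ≤ b) {t : ℝ} (ht : 0 < t) :
    P {ω | t ≤ (w ⬝ᵥ ε ω) ^ 2} ≤ ENNReal.ofReal (2 * exp (-t / (2 * b * σ ^ 2))) := by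
  rcases eq_zero_or_sum_sq_pos w with rfl | hw0
  · simp [ht.not_ge]
  set q := √(∑ i, w i ^ 2)
  have hq : 0 < q := sqrt_pos.2 hw0
  set ν := q⁻¹ • w
  have hwν : ∀ ω, w ⬝ᵥ ε ω = q * (ν ⬝ᵥ ε ω) := fun ω => by
    rw [smul_dotProduct, smul_eq_mul, mul_inv_cancel_left₀ hq.ne']
  calc P {ω | t ≤ (w ⬝ᵥ ε ω) ^ 2} ≤ P {ω | √t / q ≤ |ν ⬝ᵥ ε ω|} := by
        refine measure_mono fun ω (hω : t ≤ _) => ?_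
        rw [hwν, ← sq_abs, abs_mul, abs_of_pos hq] at hω
        show √t / q ≤ _
        rw [div_le_iff₀ hq, mul_comm]
        exact sqrt_le_iff.2 ⟨by positivity, hω⟩
    _ ≤ ENNReal.ofReal (2 * exp (-(√t / q) ^ 2 / (2 * σ ^ 2))) :=
        hε ν (sum_sq_inv_sqrt_smul_eq_one hw0) _ (by positivity)
    _ ≤ ENNReal.ofReal (2 * exp (-t / (2 * b * σ ^ 2))) := by
        refine ENNReal.ofReal_le_ofReal ?_
        have hqb : q ^ 2 ≤ b := (sq_sqrt hw0.le).trans_le hw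
        have hden : q ^ 2 * (2 * σ ^ 2) ≤ 2 * b * σ ^ 2 := by nlinarith [sq_nonneg σ]
        rw [div_pow, sq_sqrt ht.le, neg_div, neg_div, div_div]
        gcongr 2 * exp (-(t / ?_))

theorem tsum_ofReal_two_mul_exp_neg_succ_div_le {s : ℝ} (hs : 0 < s) :
    ∑' i : ℕ, ENNReal.ofReal (2 * exp (-((i : ℝ) + 1) / s)) ≤ ENNReal.ofReal (2 * s) := by
  set r := exp (-1 / s)
  have hr0 : 0 ≤ r := (exp_pos _).le
  have hr1 : r < 1 := exp_lt_one_iff.2 (div_neg_of_neg_of_pos (by norm_num) hs)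
  have hterm : ∀ i : ℕ, 2 * exp (-((i : ℝ) + 1) / s) = 2 * r * r ^ i := fun i => by
    rw [← exp_nat_mul, mul_assoc, ← exp_add]
    congr 2
    ring
  simp_rw [hterm]
  rw [← ENNReal.ofReal_tsum_of_nonneg (fun i => by positivity)
      ((summable_geometric_of_lt_one hr0 hr1).mul_left _),
    tsum_mul_left, tsum_geometric_of_lt_one hr0 hr1]
  refine ENNReal.ofReal_le_ofReal ?_
  have hexp : r * (1 + 1 / s) ≤ 1 := by
    have := add_one_le_exp (1 / s)
    rw [show r = (exp (1 / s))⁻¹ by rw [← exp_neg, ← neg_div]]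
    rw [inv_mul_le_iff₀ (exp_pos _)]
    linarith
  rw [← div_eq_mul_inv, div_le_iff₀ (by linarith)]
  field_simp at hexp
  nlinarith

/-- `h` need not be measurable; `F` is the layer-cake majorant `1 + ∑ᵢ 1{i + 1 ≤ h}` with each
level set replaced by a measurable hull of the same measure. -/
theorem exists_measurable_ofReal_le_lintegral_le [IsProbabilityMeasure P] (h : Ω → ℝ)
    (b : ℕ → ℝ≥0∞) (htail : ∀ i : ℕ, P {ω | (i : ℝ) + 1 ≤ h ω} ≤ b i) :
    ∃ F : Ω → ℝ≥0∞, Measurable F ∧ (∀ ω, ENNReal.ofReal (h ω) ≤ F ω) ∧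
      ∫⁻ ω, F ω ∂P ≤ 1 + ∑' i, b i := by
  set T : ℕ → Set Ω := fun i => toMeasurable P {ω | (i : ℝ) + 1 ≤ h ω}
  have hT : ∀ i, Measurable ((T i).indicator (1 : Ω → ℝ≥0∞)) := fun i =>
    measurable_one.indicator (measurableSet_toMeasurable _ _)
  have hsum : Measurable fun ω => ∑' i, (T i).indicator 1 ω := Measurable.tsum hT
  refine ⟨fun ω => 1 + ∑' i, (T i).indicator 1 ω, measurable_const.add hsum, fun ω => ?_, ?_⟩
  · have hone : ∀ i ∈ range ⌊h ω⌋₊, (1 : ℝ≥0∞) = (T i).indicator 1 ω := fun i hi => by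
      refine (Set.indicator_of_mem (subset_toMeasurable P _ ?_) (1 : Ω → ℝ≥0∞)).symm
      have := (Nat.le_floor_iff' (Nat.succ_ne_zero i)).1 (mem_range.1 hi)
      exact_mod_cast this
    calc ENNReal.ofReal (h ω) ≤ ENNReal.ofReal ((⌊h ω⌋₊ + 1 : ℕ) : ℝ) :=
          ENNReal.ofReal_le_ofReal (by push_cast; exact (Nat.lt_floor_add_one _).le)
      _ = 1 + ∑ i ∈ range ⌊h ω⌋₊, (1 : ℝ≥0∞) := by
          rw [ENNReal.ofReal_natCast]; simp [add_comm]
      _ ≤ 1 + ∑' i, (T i).indicator 1 ω := by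
          rw [sum_congr rfl hone]
          gcongr
          exact ENNReal.sum_le_tsum _
  · rw [lintegral_add_left measurable_const, lintegral_tsum fun i => (hT i).aemeasurable]
    simp only [lintegral_const, measure_univ, mul_one,
      lintegral_indicator_one (measurableSet_toMeasurable _ _), T, measure_toMeasurable]
    gcongr with i
    exact htail i

theorem measure_le_sum_le_of_exp_tail [IsProbabilityMeasure P] {ι : Type*} [Fintype ι]
    (h : ι → Ω → ℝ) {s : ℝ} (hs : 0 < s)
    (htail : ∀ j t, 0 < t → P {ω | t ≤ h j ω} ≤ ENNReal.ofReal (2 * exp (-t / s)))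
    {T : ℝ} (hT : 0 < T) :
    P {ω | T ≤ ∑ j, h j ω} ≤ ENNReal.ofReal (Fintype.card ι * (1 + 2 * s) / T) := by
  have hF := fun j => exists_measurable_ofReal_le_lintegral_le (h j) _
    fun i => htail j ((i : ℝ) + 1) (by positivity)
  choose F hFmeas hFge hFint using hF
  have hint : ∀ j, ∫⁻ ω, F j ω ∂P ≤ ENNReal.ofReal (1 + 2 * s) := fun j => by
    rw [ENNReal.ofReal_add zero_le_one (by positivity), ENNReal.ofReal_one]
    exact (hFint j).trans (by gcongr; exact tsum_ofReal_two_mul_exp_neg_succ_div_le hs)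
  have hsub : {ω | T ≤ ∑ j, h j ω} ⊆ {ω | ENNReal.ofReal T ≤ ∑ j, F j ω} := fun ω hω =>
    calc ENNReal.ofReal T ≤ ENNReal.ofReal (∑ j, h j ω) := ENNReal.ofReal_le_ofReal hω
      _ ≤ ∑ j, ENNReal.ofReal (h j ω) :=
          le_sum_of_subadditive _ ENNReal.ofReal_zero.le (fun _ _ => ENNReal.ofReal_add_le) _ _
      _ ≤ ∑ j, F j ω := sum_le_sum fun j _ => hFge j ω
  calc P {ω | T ≤ ∑ j, h j ω} ≤ (∫⁻ ω, ∑ j, F j ω ∂P) / ENNReal.ofReal T :=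
        (measure_mono hsub).trans <| meas_ge_le_lintegral_div
          (Finset.measurable_sum _ fun j _ => hFmeas j).aemeasurable
          (ENNReal.ofReal_pos.2 hT).ne' ENNReal.ofReal_ne_top
    _ ≤ ENNReal.ofReal (Fintype.card ι * (1 + 2 * s)) / ENNReal.ofReal T := by
        rw [lintegral_finsetSum _ fun j _ => hFmeas j, ENNReal.ofReal_mul (by positivity),
          ENNReal.ofReal_natCast]
        gcongr
        calc ∑ j, ∫⁻ ω, F j ω ∂P ≤ ∑ _j : ι, ENNReal.ofReal (1 + 2 * s) :=
              sum_le_sum fun j _ => hint j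
          _ = _ := by simp
    _ = ENNReal.ofReal (Fintype.card ι * (1 + 2 * s) / T) := (ENNReal.ofReal_div_of_pos hT).symm

theorem measure_setOf_exists_le_ofReal_sum {ι : Type*} [Fintype ι] {p : ι → Ω → Prop}
    (a : ι → ℝ) (ha : ∀ i, 0 ≤ a i) (h : ∀ i, P {ω | p i ω} ≤ ENNReal.ofReal (a i)) :
    P {ω | ∃ i, p i ω} ≤ ENNReal.ofReal (∑ i, a i) := by
  rw [Set.ofPred_exists, ENNReal.ofReal_sum_of_nonneg fun i _ => ha i]
  exact (measure_iUnion_fintype_le P _).trans (sum_le_sum fun i _ => h i)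

end Tails

section Oracle

variable {Ω : Type*} [MeasurableSpace Ω] {P : Measure Ω} [IsProbabilityMeasure P]
  {d : ℕ} {ι : Type*} [Fintype ι] {X : Matrix (Fin d) ι ℝ} {W : Matrix (Fin d) (Fin d) ℝ}
  {ε : Ω → Fin d → ℝ} {σ : ℝ} {β : ι → ℝ} {b : Ω → ι → ℝ} {c C : ℝ}

theorem oracle_sq_error_tail (hε : SubG P ε σ) (hσ : 0 < σ) (hW : W.IsSymm)
    (hmin : ∀ ω g, weightedRSS X W (X *ᵥ β + ε ω) (b ω) ≤ weightedRSS X W (X *ᵥ β + ε ω) g)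
    (hd : 0 < d) (hc : 0 < c) (hC : 0 < C)
    (hρ1 : c ≤ lmin ((1 / (d : ℝ)) • (Xᵀ * W * X)))
    (hρ2 : lmax ((1 / (d : ℝ)) • (Xᵀ * W * W * X)) ≤ C) {R : ℝ} (hR : 0 < R) :
    P {ω | R < ∑ j, (b ω j - β j) ^ 2} ≤
      ENNReal.ofReal (Fintype.card ι * (1 + 4 * d * C * σ ^ 2) / ((d * c) ^ 2 * R)) := by
  have hd' : (0 : ℝ) < d := Nat.cast_pos.2 hd
  have hcol : ∀ j, ∑ i, (W *ᵥ X.col j) i ^ 2 ≤ d * C := fun j => by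
    have := (diag_le_lmax _ j).trans hρ2
    rwa [Matrix.smul_apply, smul_eq_mul, ← sum_sq_mulVec_col_eq hW, one_div,
      inv_mul_le_iff₀ hd'] at this
  have hdet : ∀ ω, (d * c) ^ 2 * ∑ j, (b ω j - β j) ^ 2 ≤ ∑ j, ((W *ᵥ X.col j) ⬝ᵥ ε ω) ^ 2 :=
    fun ω => by
      have := sq_mul_sum_sq_le_sum_sq_mulVec hc.le hρ1 (b ω - β)
      rw [smul_mulVec, gram_mulVec_sub_eq_of_minimizer hW (hmin ω)] at this
      simp only [Pi.smul_apply, Pi.sub_apply, smul_eq_mul, mul_pow, ← mul_sum,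
        transpose_mulVec_mulVec_apply hW] at this
      rw [mul_pow, mul_assoc]
      rwa [one_div, inv_pow, ← div_eq_inv_mul, le_div_iff₀' (by positivity)] at this
  calc P {ω | R < ∑ j, (b ω j - β j) ^ 2}
      ≤ P {ω | (d * c) ^ 2 * R ≤ ∑ j, ((W *ᵥ X.col j) ⬝ᵥ ε ω) ^ 2} :=
        measure_mono fun ω (hω : R < _) => (by gcongr : (d * c) ^ 2 * R ≤ _).trans (hdet ω)
    _ ≤ ENNReal.ofReal (Fintype.card ι * (1 + 2 * (2 * (d * C) * σ ^ 2)) / ((d * c) ^ 2 * R)) :=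
        measure_le_sum_le_of_exp_tail _ (by positivity)
          (fun j _ ht => hε.measure_le_sq_dotProduct hσ (hcol j) ht) (by positivity)
    _ = ENNReal.ofReal (Fintype.card ι * (1 + 4 * d * C * σ ^ 2) / ((d * c) ^ 2 * R)) := by
        ring_nf

theorem oracle_error_rate_tail (hε : SubG P ε σ) (hσ : 0 < σ) (hW : W.IsSymm)
    (hmin : ∀ ω g, weightedRSS X W (X *ᵥ β + ε ω) (b ω) ≤ weightedRSS X W (X *ᵥ β + ε ω) g)
    (hd : 0 < d) (hc : 0 < c) (hC : 0 < C)
    (hρ1 : c ≤ lmin ((1 / (d : ℝ)) • (Xᵀ * W * X)))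
    (hρ2 : lmax ((1 / (d : ℝ)) • (Xᵀ * W * W * X)) ≤ C) {C' : ℝ} (hC' : 0 < C') :
    P {ω | C' * √(Fintype.card ι / d) < √(∑ j, (b ω j - β j) ^ 2)} ≤
      ENNReal.ofReal ((1 + 4 * C * σ ^ 2) / (c * C') ^ 2) := by
  have : Nonempty ι := nonempty_of_lmin_pos (hc.trans_le hρ1)
  have hcard : (0 : ℝ) < Fintype.card ι := by exact_mod_cast Fintype.card_pos
  have hd1 : (1 : ℝ) ≤ d := by exact_mod_cast hd
  have hevent : ∀ Q, C' * √(Fintype.card ι / d) < √Q ↔ C' ^ 2 * (Fintype.card ι / d) < Q :=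
    fun Q => by rw [lt_sqrt (by positivity), mul_pow, sq_sqrt (by positivity)]
  simp only [hevent]
  refine (oracle_sq_error_tail hε hσ hW hmin hd hc hC hρ1 hρ2 (by positivity)).trans
    (ENNReal.ofReal_le_ofReal ?_)
  calc Fintype.card ι * (1 + 4 * d * C * σ ^ 2) / ((d * c) ^ 2 * (C' ^ 2 * (Fintype.card ι / d)))
      = (1 + 4 * d * C * σ ^ 2) / d / (c * C') ^ 2 := by field_simp
    _ ≤ (1 + 4 * C * σ ^ 2) / (c * C') ^ 2 := by
        gcongr
        rw [div_le_iff₀ (by positivity)]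
        nlinarith

end Oracle

theorem le_apply_of_forall_sum_le {ι : Type*} [Fintype ι] {β : ι → Type*} (f : ∀ i, β i → ℝ)
    (x : ∀ i, β i) (h : ∀ y : ∀ i, β i, ∑ i, f i (x i) ≤ ∑ i, f i (y i)) (i : ι) (z : β i) :
    f i (x i) ≤ f i z := by
  classical
  have hrest : ∑ j ∈ {i}ᶜ, f j (Function.update x i z j) = ∑ j ∈ {i}ᶜ, f j (x j) :=
    sum_congr rfl fun j hj => by rw [Function.update_of_ne (by simpa using hj)]
  have := h (Function.update x i z)
  rw [Fintype.sum_eq_add_sum_compl i, Fintype.sum_eq_add_sum_compl i (fun j => f j _),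
    Function.update_self, hrest] at this
  linarith

theorem mulVec_eq_colSub_mulVec {d p : ℕ} (A : Matrix (Fin d) (Fin p) ℝ) {S : Finset (Fin p)}
    {β : Fin p → ℝ} (hβ : ∀ j ∉ S, β j = 0) : A *ᵥ β = colSub A S *ᵥ fun j => β j := by
  funext i
  simp only [mulVec, dotProduct, colSub, submatrix_apply, id_eq]
  rw [← sum_subset (subset_univ S) fun j _ hj => by rw [hβ j hj, mul_zero]]
  exact (sum_coe_sort S fun j => A i j * β j).symm

theorem hetero_oracle_rate_of_convergence_general
    {Ω : Type*} [MeasurableSpace Ω] (P : Measure Ω) [IsProbabilityMeasure P]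
    (M : ℕ) (p : ℕ → ℕ) (n : ℕ → Fin M → ℕ) (hnpos : ∀ k m, 0 < n k m)
    (N : ℕ → ℕ) (hN : ∀ k, N k = ∑ m, n k m)
    (X : ∀ k : ℕ, ∀ m : Fin M, Matrix (Fin (n k m)) (Fin (p k)) ℝ)
    (W : ∀ k : ℕ, ∀ m : Fin M, Matrix (Fin (n k m)) (Fin (n k m)) ℝ)
    (hWdiag : ∀ k m, (W k m).IsDiag)
    (βs : ∀ k : ℕ, Fin (p k) → Fin M → ℝ)
    (ε : ∀ k : ℕ, ∀ m : Fin M, Ω → Fin (n k m) → ℝ)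
    (σ : Fin M → ℝ) (hσ : ∀ m, 0 < σ m)
    (hsub : ∀ k m, SubG P (ε k m) (σ m))
    (Y : ∀ k : ℕ, ∀ m : Fin M, Ω → Fin (n k m) → ℝ)
    (hY : ∀ k m ω, Y k m ω = (X k m) *ᵥ (fun j => βs k j m) + ε k m ω)
    -- heterogeneity-model supports
    (Sm : ∀ k : ℕ, Fin M → Finset (Fin (p k)))
    (hSm : ∀ k m j, j ∈ Sm k m ↔ βs k j m ≠ 0)
    -- oracle estimator: minimizes the restricted weighted LS loss
    (βc : ∀ k : ℕ, ∀ m : Fin M, Ω → ({j // j ∈ Sm k m} → ℝ))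
    (hβc : ∀ k ω (cand : (m : Fin M) → ({j // j ∈ Sm k m} → ℝ)),
      (1 / (2 * (N k : ℝ))) * ∑ m,
          (Y k m ω - (colSub (X k m) (Sm k m)) *ᵥ (βc k m ω)) ⬝ᵥ
            (W k m *ᵥ (Y k m ω - (colSub (X k m) (Sm k m)) *ᵥ (βc k m ω))) ≤
        (1 / (2 * (N k : ℝ))) * ∑ m,
          (Y k m ω - (colSub (X k m) (Sm k m)) *ᵥ cand m) ⬝ᵥ
            (W k m *ᵥ (Y k m ω - (colSub (X k m) (Sm k m)) *ᵥ cand m)))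
    (ρ1 ρ2 : ℕ → Fin M → ℝ)
    (hρ1 : ∀ k m, ρ1 k m = lmin ((1 / (n k m : ℝ)) •
      ((colSub (X k m) (Sm k m))ᵀ * W k m * colSub (X k m) (Sm k m))))
    (hρ2 : ∀ k m, ρ2 k m = lmax ((1 / (n k m : ℝ)) •
      ((colSub (X k m) (Sm k m))ᵀ * W k m * W k m * colSub (X k m) (Sm k m))))
    (c C : ℝ) (hc : 0 < c) (hcC : c ≤ C)
    (hbnd : ∀ k m, c ≤ ρ1 k m ∧ ρ2 k m ≤ C) :
    ∀ δ : ℝ, 0 < δ → ∃ C' : ℝ, ∃ K : ℕ, ∀ k, K ≤ k →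
      P {ω | ∃ m : Fin M,
          C' * Real.sqrt (((Sm k m).card : ℝ) / (n k m : ℝ)) <
            Real.sqrt (∑ j : {j // j ∈ Sm k m},
              (βc k m ω j - βs k (j : Fin (p k)) m) ^ 2)} ≤
        ENNReal.ofReal δ := by
  intro δ hδ
  have hC : 0 < C := hc.trans_le hcC
  set K := ∑ m, (1 + 4 * C * σ m ^ 2)
  have hK : 0 ≤ K := sum_nonneg fun m _ => by positivity
  have hscale : (c * (√((K + 1) / δ) / c)) ^ 2 = (K + 1) / δ := by
    rw [mul_div_cancel₀ _ hc.ne', sq_sqrt (by positivity)]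
  refine ⟨√((K + 1) / δ) / c, 0, fun k _ => ?_⟩
  refine (measure_setOf_exists_le_ofReal_sum (fun m => (1 + 4 * C * σ m ^ 2) / ((K + 1) / δ))
    (fun m => by positivity) fun m => ?_).trans (ENNReal.ofReal_le_ofReal ?_)
  · have hN0 : (0 : ℝ) < N k := by
      exact_mod_cast hN k ▸ sum_pos (fun m _ => hnpos k m) ⟨m, mem_univ m⟩
    have hYS : ∀ ω, Y k m ω = colSub (X k m) (Sm k m) *ᵥ (fun j => βs k j m) + ε k m ω :=
      fun ω => by
        rw [hY, mulVec_eq_colSub_mulVec _ fun j hj => not_not.1 (mt (hSm k m j).2 hj)]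
    have hmin := fun ω g => hYS ω ▸ le_apply_of_forall_sum_le
      (fun m b => weightedRSS (colSub (X k m) (Sm k m)) (W k m) (Y k m ω) b) (fun m => βc k m ω)
      (fun cand => le_of_mul_le_mul_left (hβc k ω cand) (by positivity)) m g
    have := oracle_error_rate_tail (hsub k m) (hσ m) (hWdiag k m).isSymm hmin (hnpos k m) hc hC
      (hρ1 k m ▸ (hbnd k m).1) (hρ2 k m ▸ (hbnd k m).2) (C' := √((K + 1) / δ) / c) (by positivity)
    rwa [Fintype.card_coe, hscale] at this
  · rw [← sum_div, div_div_eq_mul_div, div_le_iff₀ (by positivity)]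
    nlinarith

/-- Corollary 3: the heterogeneity-model oracle estimators converge at the rate
`√(|S_{m,k}|/n_{m,k})` in probability, uniformly over the datasets. -/
theorem hetero_oracle_rate_of_convergence
    {Ω : Type*} [MeasurableSpace Ω] (P : Measure Ω) [IsProbabilityMeasure P]
    (M : ℕ) (p : ℕ → ℕ) (n : ℕ → Fin M → ℕ) (hnpos : ∀ k m, 0 < n k m)
    (N : ℕ → ℕ) (hN : ∀ k, N k = ∑ m, n k m)
    (hNtop : Tendsto N atTop atTop)
    (X : ∀ k : ℕ, ∀ m : Fin M, Matrix (Fin (n k m)) (Fin (p k)) ℝ)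
    (W : ∀ k : ℕ, ∀ m : Fin M, Matrix (Fin (n k m)) (Fin (n k m)) ℝ)
    (hWdiag : ∀ k m, (W k m).IsDiag) (hWnonneg : ∀ k m i, 0 ≤ W k m i i)
    (βs : ∀ k : ℕ, Fin (p k) → Fin M → ℝ)
    (ε : ∀ k : ℕ, ∀ m : Fin M, Ω → Fin (n k m) → ℝ)
    (σ : Fin M → ℝ) (hσ : ∀ m, 0 < σ m)
    (hsub : ∀ k m, SubG P (ε k m) (σ m))
    (Y : ∀ k : ℕ, ∀ m : Fin M, Ω → Fin (n k m) → ℝ)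
    (hY : ∀ k m ω, Y k m ω = (X k m) *ᵥ (fun j => βs k j m) + ε k m ω)
    -- heterogeneity-model supports
    (Sm : ∀ k : ℕ, Fin M → Finset (Fin (p k)))
    (hSm : ∀ k m j, j ∈ Sm k m ↔ βs k j m ≠ 0)
    (Sf : ∀ k, Finset (Fin (p k))) (hSf : ∀ k, Sf k = Finset.univ.biUnion (Sm k))
    (hinv : ∀ k m,
      IsUnit ((colSub (X k m) (Sm k m))ᵀ * W k m * colSub (X k m) (Sm k m)).det)
    -- oracle estimator: minimizes the restricted weighted LS loss
    (βc : ∀ k : ℕ, ∀ m : Fin M, Ω → ({j // j ∈ Sm k m} → ℝ))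
    (hβc : ∀ k ω (cand : (m : Fin M) → ({j // j ∈ Sm k m} → ℝ)),
      (1 / (2 * (N k : ℝ))) * ∑ m,
          (Y k m ω - (colSub (X k m) (Sm k m)) *ᵥ (βc k m ω)) ⬝ᵥ
            (W k m *ᵥ (Y k m ω - (colSub (X k m) (Sm k m)) *ᵥ (βc k m ω))) ≤
        (1 / (2 * (N k : ℝ))) * ∑ m,
          (Y k m ω - (colSub (X k m) (Sm k m)) *ᵥ cand m) ⬝ᵥ
            (W k m *ᵥ (Y k m ω - (colSub (X k m) (Sm k m)) *ᵥ cand m)))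
    (ρ1 ρ2 : ℕ → Fin M → ℝ)
    (hρ1 : ∀ k m, ρ1 k m = lmin ((1 / (n k m : ℝ)) •
      ((colSub (X k m) (Sm k m))ᵀ * W k m * colSub (X k m) (Sm k m))))
    (hρ2 : ∀ k m, ρ2 k m = lmax ((1 / (n k m : ℝ)) •
      ((colSub (X k m) (Sm k m))ᵀ * W k m * W k m * colSub (X k m) (Sm k m))))
    (c C : ℝ) (hc : 0 < c) (hcC : c ≤ C)
    (hbnd : ∀ k m, c ≤ ρ1 k m ∧ ρ2 k m ≤ C)
    (hbal : ∀ k m, (N k : ℝ) / (n k m : ℝ) ≤ C)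
    (hSsmall : Tendsto (fun k => ((Sf k).card : ℝ) / (N k : ℝ)) atTop (nhds 0)) :
    ∀ δ : ℝ, 0 < δ → ∃ C' : ℝ, ∃ K : ℕ, ∀ k, K ≤ k →
      P {ω | ∃ m : Fin M,
          C' * Real.sqrt (((Sm k m).card : ℝ) / (n k m : ℝ)) <
            Real.sqrt (∑ j : {j // j ∈ Sm k m},
              (βc k m ω j - βs k (j : Fin (p k)) m) ^ 2)} ≤
        ENNReal.ofReal δ :=
  hetero_oracle_rate_of_convergence_general P M p n hnpos N hN X W hWdiag βs ε σ hσ hsub Y hY Sm hSm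
    βc hβc ρ1 ρ2 hρ1 hρ2 c C hc hcC hbnd
end
end

section
/- Let S be a finite index set with |S| elements, let M ∈ ℕ, and for each j ∈ S let β*_j ∈ ℝ^M and u_j ∈ ℝ^M; let r = (r_1,…,r_M) ∈ ℝ^M with every r_m ≥ 0, and write r∘u_j for the componentwise (Hadamard) product, (r∘u_j)_m = r_m u_j^m. If ∑_{j∈S} (u_j^m)² = 1 for every m = 1,…,M, then ∑_{j∈S} ( ‖β*_j + r∘u_j‖₂ − ‖β*_j‖₂ ) ≤ √|S| · ∑_{m=1}^M r_m, where ‖·‖₂ is the Euclidean norm on ℝ^M. -/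
open Finset Real

lemma sqrt_sum_add_sq_sub_sqrt_sum_sq_le {κ : Type*} [Fintype κ] (b c : κ → ℝ) :
    √(∑ k, (b k + c k) ^ 2) - √(∑ k, b k ^ 2) ≤ √(∑ k, c k ^ 2) := by
  have h := norm_add_le (WithLp.toLp 2 b : EuclideanSpace ℝ κ) (WithLp.toLp 2 c)
  simp only [EuclideanSpace.norm_eq, Real.norm_eq_abs, sq_abs, ← WithLp.toLp_add,
    Pi.add_apply] at h
  linarith

lemma sum_sqrt_le_sqrt_card_mul_sqrt_sum {ι : Type*} (s : Finset ι) {a : ι → ℝ}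
    (ha : ∀ i, 0 ≤ a i) :
    ∑ i ∈ s, √(a i) ≤ √(#s) * √(∑ i ∈ s, a i) := by
  simpa using Real.sum_sqrt_mul_sqrt_le s (fun _ ↦ zero_le_one) ha

lemma sqrt_sum_sq_le_sum {ι : Type*} (s : Finset ι) {r : ι → ℝ} (hr : ∀ i ∈ s, 0 ≤ r i) :
    √(∑ i ∈ s, r i ^ 2) ≤ ∑ i ∈ s, r i :=
  Real.sqrt_le_iff.2 ⟨sum_nonneg hr, sum_sq_le_sq_sum_of_nonneg hr⟩

lemma sum_sum_mul_sq_eq_sum_sq {ι κ : Type*} (s : Finset ι) (t : Finset κ) (r : κ → ℝ)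
    (u : ι → κ → ℝ) (hu : ∀ k ∈ t, ∑ j ∈ s, u j k ^ 2 = 1) :
    ∑ j ∈ s, ∑ k ∈ t, (r k * u j k) ^ 2 = ∑ k ∈ t, r k ^ 2 := by
  rw [sum_comm]
  refine sum_congr rfl fun k hk ↦ ?_
  simp only [mul_pow, ← mul_sum, hu k hk, mul_one]

/-- Deterministic bound on the group-penalty increment (term Q₃ in the proof of
Theorem 1): `∑_{j∈S} (‖β*_j + r∘u_j‖₂ − ‖β*_j‖₂) ≤ √|S| ∑_m r_m`. -/
theorem group_penalty_increment_bound
    {ι : Type*} [Fintype ι] (M : ℕ)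
    (βs u : ι → Fin M → ℝ) (r : Fin M → ℝ)
    (hr : ∀ m, 0 ≤ r m)
    (hu : ∀ m, (∑ j, u j m ^ 2) = 1) :
    ∑ j, (Real.sqrt (∑ m, (βs j m + r m * u j m) ^ 2) -
        Real.sqrt (∑ m, βs j m ^ 2)) ≤
      Real.sqrt (Fintype.card ι) * ∑ m, r m :=
  calc _ ≤ ∑ j, √(∑ m, (r m * u j m) ^ 2) :=
        sum_le_sum fun j _ ↦ sqrt_sum_add_sq_sub_sqrt_sum_sq_le _ _
    _ ≤ √(Fintype.card ι) * √(∑ j, ∑ m, (r m * u j m) ^ 2) :=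
        sum_sqrt_le_sqrt_card_mul_sqrt_sum univ fun _ ↦ sum_nonneg fun _ _ ↦ sq_nonneg _
    _ = √(Fintype.card ι) * √(∑ m, r m ^ 2) := by
        rw [sum_sum_mul_sq_eq_sum_sq univ univ r u fun m _ ↦ hu m]
    _ ≤ √(Fintype.card ι) * ∑ m, r m := by
        gcongr
        exact sqrt_sum_sq_le_sum univ fun m _ ↦ hr m
end

section
/- Let X ∈ ℝ^{n×p}, let W ∈ ℝ^{n×n} be diagonal with nonnegative entries, let S ⊆ {1,…,p} with complement S^c, let β*_S ∈ ℝ^{|S|}, ε ∈ ℝ^n, and Y = X_S β*_S + ε. Assume X_S^⊤ W X_S is invertible, set β̃_S = (X_S^⊤ W X_S)^{−1} X_S^⊤ W Y (the weighted least-squares estimator restricted to S), and set ψ = ‖X_{S^c}^⊤ W X_S (X_S^⊤ W X_S)^{−1}‖_∞. Then ‖X_{S^c}^⊤ W (Y − X_S β̃_S)‖_∞ ≤ (1 + ψ) ‖X^⊤ W ε‖_∞. -/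
open Matrix Finset Real

noncomputable section

/-- Maximum absolute row sum of a matrix (operator ∞-norm). -/
def rowSumNorm {ι κ : Type*} [Fintype ι] [Fintype κ] (A : Matrix ι κ ℝ) : ℝ :=
  ⨆ i, ∑ j, |A i j|

/-- Maximum absolute entry of a vector (ℓ∞ norm). -/
def vinf {ι : Type*} (v : ι → ℝ) : ℝ := ⨆ i, |v i|

/-! Expanding `β̃_S = β*_S + G⁻¹ X_Sᵀ W ε` with `G = X_Sᵀ W X_S`, the residual correlations are
`X_{S^c}ᵀ W ε - (X_{S^c}ᵀ W X_S G⁻¹)(X_Sᵀ W ε)`. Both `X_{S^c}ᵀ W ε` and `X_Sᵀ W ε` are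
subvectors of `Xᵀ W ε`, so the triangle inequality and `‖A v‖_∞ ≤ ‖A‖_∞ ‖v‖_∞` give the bound. -/

section InfNorm

variable {ι κ : Type*}

lemma vinf_nonneg (v : ι → ℝ) : 0 ≤ vinf v :=
  Real.iSup_nonneg fun _ => abs_nonneg _

lemma rowSumNorm_nonneg [Fintype ι] [Fintype κ] (A : Matrix ι κ ℝ) : 0 ≤ rowSumNorm A :=
  Real.iSup_nonneg fun _ => sum_nonneg fun _ _ => abs_nonneg _

lemma abs_le_vinf [Finite ι] (v : ι → ℝ) (i : ι) : |v i| ≤ vinf v :=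
  le_ciSup (f := fun i => |v i|) (Set.finite_range _).bddAbove i

lemma sum_abs_le_rowSumNorm [Fintype ι] [Fintype κ] (A : Matrix ι κ ℝ) (i : ι) :
    ∑ j, |A i j| ≤ rowSumNorm A :=
  le_ciSup (f := fun i => ∑ j, |A i j|) (Set.finite_range _).bddAbove i

lemma vinf_le {v : ι → ℝ} {c : ℝ} (hc : 0 ≤ c) (h : ∀ i, |v i| ≤ c) : vinf v ≤ c :=
  Real.iSup_le h hc

lemma vinf_comp_le [Finite ι] (v : ι → ℝ) (f : κ → ι) : vinf (v ∘ f) ≤ vinf v :=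
  vinf_le (vinf_nonneg v) fun j => abs_le_vinf v (f j)

lemma vinf_sub_le [Finite ι] (u w : ι → ℝ) : vinf (u - w) ≤ vinf u + vinf w :=
  vinf_le (add_nonneg (vinf_nonneg u) (vinf_nonneg w)) fun i =>
    (abs_sub (u i) (w i)).trans (add_le_add (abs_le_vinf u i) (abs_le_vinf w i))

lemma vinf_mulVec_le [Fintype ι] [Fintype κ] (A : Matrix ι κ ℝ) (v : κ → ℝ) :
    vinf (A *ᵥ v) ≤ rowSumNorm A * vinf v := by
  refine vinf_le (mul_nonneg (rowSumNorm_nonneg A) (vinf_nonneg v)) fun i => ?_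
  calc |(A *ᵥ v) i| ≤ ∑ j, |A i j| * |v j| := by
        simpa only [mulVec, dotProduct, abs_mul] using abs_sum_le_sum_abs (fun j => A i j * v j) univ
    _ ≤ ∑ j, |A i j| * vinf v :=
        sum_le_sum fun j _ => mul_le_mul_of_nonneg_left (abs_le_vinf v j) (abs_nonneg _)
    _ = (∑ j, |A i j|) * vinf v := (sum_mul ..).symm
    _ ≤ rowSumNorm A * vinf v :=
        mul_le_mul_of_nonneg_right (sum_abs_le_rowSumNorm A i) (vinf_nonneg v)

end InfNorm

lemma colSub_transpose_mulVec {d p : ℕ} (X : Matrix (Fin d) (Fin p) ℝ) (I : Finset (Fin p))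
    (v : Fin d → ℝ) : (colSub X I)ᵀ *ᵥ v = (Xᵀ *ᵥ v) ∘ Subtype.val := by
  ext j
  simp [colSub, mulVec, dotProduct]

lemma vinf_colSub_transpose_mulVec_le {d p : ℕ} (X : Matrix (Fin d) (Fin p) ℝ)
    (I : Finset (Fin p)) (v : Fin d → ℝ) : vinf ((colSub X I)ᵀ *ᵥ v) ≤ vinf (Xᵀ *ᵥ v) := by
  rw [colSub_transpose_mulVec]
  exact vinf_comp_le _ _

section WeightedLeastSquares

variable {R m k l : Type*} [CommRing R] [Fintype m] [Fintype k] [DecidableEq k]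
  (A : Matrix m k R) (W : Matrix m m R)

lemma wls_estimator_eq (hA : IsUnit (Aᵀ * W * A).det) (β : k → R) (ε : m → R) :
    (Aᵀ * W * A)⁻¹ *ᵥ (Aᵀ *ᵥ (W *ᵥ (A *ᵥ β + ε))) =
      β + (Aᵀ * W * A)⁻¹ *ᵥ (Aᵀ *ᵥ (W *ᵥ ε)) := by
  have hsignal : (Aᵀ * W * A)⁻¹ *ᵥ (Aᵀ *ᵥ (W *ᵥ (A *ᵥ β))) = β := by
    simp only [mulVec_mulVec, ← Matrix.mul_assoc, nonsing_inv_mul _ hA, one_mulVec]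
  rw [mulVec_add, mulVec_add, mulVec_add, hsignal]

lemma wls_residual_correlation (hA : IsUnit (Aᵀ * W * A).det) (C : Matrix m l R)
    (β : k → R) (ε : m → R) :
    Cᵀ *ᵥ (W *ᵥ (A *ᵥ β + ε - A *ᵥ ((Aᵀ * W * A)⁻¹ *ᵥ (Aᵀ *ᵥ (W *ᵥ (A *ᵥ β + ε)))))) =
      Cᵀ *ᵥ (W *ᵥ ε) - (Cᵀ * W * A * (Aᵀ * W * A)⁻¹) *ᵥ (Aᵀ *ᵥ (W *ᵥ ε)) := by
  rw [wls_estimator_eq A W hA, mulVec_add, add_sub_add_left_eq_sub, mulVec_sub, mulVec_sub]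
  simp only [mulVec_mulVec, Matrix.mul_assoc]

end WeightedLeastSquares

theorem wls_residual_inf_norm_bound_general
    (n p : ℕ) (X : Matrix (Fin n) (Fin p) ℝ)
    (W : Matrix (Fin n) (Fin n) ℝ)
    (S : Finset (Fin p)) (βS : {j // j ∈ S} → ℝ) (ε : Fin n → ℝ)
    (Y : Fin n → ℝ) (hY : Y = (colSub X S) *ᵥ βS + ε)
    (hinv : IsUnit ((colSub X S)ᵀ * W * colSub X S).det)
    (βt : {j // j ∈ S} → ℝ)
    (hβt : βt = ((colSub X S)ᵀ * W * colSub X S)⁻¹ *ᵥ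
      ((colSub X S)ᵀ *ᵥ (W *ᵥ Y)))
    (ψ : ℝ)
    (hψ : ψ = rowSumNorm
      ((colSub X Sᶜ)ᵀ * W * colSub X S * ((colSub X S)ᵀ * W * colSub X S)⁻¹)) :
    vinf ((colSub X Sᶜ)ᵀ *ᵥ (W *ᵥ (Y - colSub X S *ᵥ βt))) ≤
      (1 + ψ) * vinf (Xᵀ *ᵥ (W *ᵥ ε)) := by
  subst hY hβt hψ
  rw [wls_residual_correlation _ W hinv]
  set M := (colSub X Sᶜ)ᵀ * W * colSub X S * ((colSub X S)ᵀ * W * colSub X S)⁻¹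
  calc _ ≤ vinf ((colSub X Sᶜ)ᵀ *ᵥ (W *ᵥ ε)) + vinf (M *ᵥ ((colSub X S)ᵀ *ᵥ (W *ᵥ ε))) :=
        vinf_sub_le _ _
    _ ≤ vinf (Xᵀ *ᵥ (W *ᵥ ε)) + rowSumNorm M * vinf (Xᵀ *ᵥ (W *ᵥ ε)) := by
        gcongr
        · exact vinf_colSub_transpose_mulVec_le X _ _
        · exact (vinf_mulVec_le M _).trans <| mul_le_mul_of_nonneg_left
            (vinf_colSub_transpose_mulVec_le X _ _) (rowSumNorm_nonneg M)
    _ = (1 + rowSumNorm M) * vinf (Xᵀ *ᵥ (W *ᵥ ε)) := by ring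

/-- Inequality (S1.snorm) in the proof of Theorem 2: the weighted residual correlations on
`S^c` for the restricted weighted least-squares estimator are bounded by
`(1 + ψ)‖X^⊤ W ε‖_∞`. -/
theorem wls_residual_inf_norm_bound
    (n p : ℕ) (X : Matrix (Fin n) (Fin p) ℝ)
    (W : Matrix (Fin n) (Fin n) ℝ)
    (hWdiag : W.IsDiag) (hWnonneg : ∀ i, 0 ≤ W i i)
    (S : Finset (Fin p)) (βS : {j // j ∈ S} → ℝ) (ε : Fin n → ℝ)
    (Y : Fin n → ℝ) (hY : Y = (colSub X S) *ᵥ βS + ε)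
    (hinv : IsUnit ((colSub X S)ᵀ * W * colSub X S).det)
    (βt : {j // j ∈ S} → ℝ)
    (hβt : βt = ((colSub X S)ᵀ * W * colSub X S)⁻¹ *ᵥ
      ((colSub X S)ᵀ *ᵥ (W *ᵥ Y)))
    (ψ : ℝ)
    (hψ : ψ = rowSumNorm
      ((colSub X Sᶜ)ᵀ * W * colSub X S * ((colSub X S)ᵀ * W * colSub X S)⁻¹)) :
    vinf ((colSub X Sᶜ)ᵀ *ᵥ (W *ᵥ (Y - colSub X S *ᵥ βt))) ≤
      (1 + ψ) * vinf (Xᵀ *ᵥ (W *ᵥ ε)) :=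
  wls_residual_inf_norm_bound_general n p X W S βS ε Y hY hinv βt hβt ψ hψ
end
end

section
/- Let X ∈ ℝ^{n×p}, let W ∈ ℝ^{n×n} be diagonal with nonnegative entries, let S ⊆ {1,…,p} with complement S^c, let β*_S ∈ ℝ^{|S|}, ε ∈ ℝ^n, and Y = X_S β*_S + ε. Assume X_S^⊤ W X_S is invertible and set ψ = ‖X_{S^c}^⊤ W X_S (X_S^⊤ W X_S)^{−1}‖_∞. Suppose β̂_S ∈ ℝ^{|S|} satisfies the stationarity equation X_S^⊤ W (Y − X_S β̂_S) = c · v for some scalar c ≥ 0 and some vector v ∈ ℝ^{|S|} with ‖v‖_∞ ≤ 1. Then ‖X_{S^c}^⊤ W (Y − X_S β̂_S)‖_∞ ≤ (1 + ψ) ‖X^⊤ W ε‖_∞ + c ψ. -/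
open Matrix Finset Real

noncomputable section

/-!
`vinf` and `rowSumNorm` are the sup norm on `ι → ℝ` and the `L∞` operator norm on matrices, so
the argument is the usual one: solving the stationarity equation for `β̂_S − β*_S` gives
`X_{Sᶜ}ᵀ W (Y − X_S β̂_S) = Ψ (c v − X_Sᵀ W ε) + X_{Sᶜ}ᵀ W ε` with `‖Ψ‖ = ψ`, and both
`ε`-terms are coordinates of `Xᵀ W ε`.
-/

open scoped Matrix.Norms.Operator

lemma pi_norm_eq_iSup {ι : Type*} [Fintype ι] {E : ι → Type*}
    [∀ i, SeminormedAddCommGroup (E i)] (f : ∀ i, E i) : ‖f‖ = ⨆ i, ‖f i‖ := by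
  have hbdd : BddAbove (Set.range fun i => ‖f i‖) := (Set.finite_range _).bddAbove
  refine le_antisymm ?_ (Real.iSup_le (norm_le_pi_norm f) (norm_nonneg f))
  exact (pi_norm_le_iff_of_nonneg (Real.iSup_nonneg fun i => norm_nonneg (f i))).2
    fun i => le_ciSup hbdd i

lemma vinf_eq_norm {ι : Type*} [Fintype ι] (v : ι → ℝ) : vinf v = ‖v‖ := by
  simp only [vinf, pi_norm_eq_iSup, Real.norm_eq_abs]

lemma rowSumNorm_eq_linfty_opNorm {ι κ : Type*} [Fintype ι] [Fintype κ] (A : Matrix ι κ ℝ) :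
    rowSumNorm A = ‖A‖ := by
  change _ = ‖fun i => WithLp.toLp 1 (A i)‖
  simp only [rowSumNorm, pi_norm_eq_iSup, PiLp.norm_eq_of_L1, Real.norm_eq_abs]

lemma norm_colSub_transpose_mulVec_le {d p : ℕ} (X : Matrix (Fin d) (Fin p) ℝ)
    (S : Finset (Fin p)) (w : Fin d → ℝ) : ‖(colSub X S)ᵀ *ᵥ w‖ ≤ ‖Xᵀ *ᵥ w‖ :=
  (pi_norm_le_iff_of_nonneg (norm_nonneg _)).2 fun j => norm_le_pi_norm (Xᵀ *ᵥ w) (j : Fin p)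

/-- Eliminating `δ` from the stationarity equation `P (A δ + ε) = g` through the invertible
`P A` expresses every other projection `Q (A δ + ε)` of the residual. -/
lemma mulVec_residual_eq_of_stationary {R m k l : Type*} [CommRing R] [Fintype m] [Fintype k]
    [DecidableEq k] (A : Matrix m k R) (P : Matrix k m R) (Q : Matrix l m R) (δ : k → R)
    (ε : m → R) (g : k → R) (hPA : IsUnit (P * A).det) (hstat : P *ᵥ (A *ᵥ δ + ε) = g) :
    Q *ᵥ (A *ᵥ δ + ε) = (Q * A * (P * A)⁻¹) *ᵥ (g - P *ᵥ ε) + Q *ᵥ ε := by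
  have hPAδ : (P * A) *ᵥ δ = g - P *ᵥ ε := by
    rw [← hstat, mulVec_add, mulVec_mulVec, add_sub_cancel_right]
  rw [← hPAδ, mulVec_mulVec, Matrix.mul_assoc (Q * A), nonsing_inv_mul _ hPA, Matrix.mul_one,
    mulVec_add, mulVec_mulVec]

theorem stationary_residual_inf_norm_bound_general
    (n p : ℕ) (X : Matrix (Fin n) (Fin p) ℝ)
    (W : Matrix (Fin n) (Fin n) ℝ)
    (S : Finset (Fin p)) (βS : {j // j ∈ S} → ℝ) (ε : Fin n → ℝ)
    (Y : Fin n → ℝ) (hY : Y = (colSub X S) *ᵥ βS + ε)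
    (hinv : IsUnit ((colSub X S)ᵀ * W * colSub X S).det)
    (ψ : ℝ)
    (hψ : ψ = rowSumNorm
      ((colSub X Sᶜ)ᵀ * W * colSub X S * ((colSub X S)ᵀ * W * colSub X S)⁻¹))
    (βh : {j // j ∈ S} → ℝ) (c : ℝ) (hc : 0 ≤ c)
    (v : {j // j ∈ S} → ℝ) (hv : vinf v ≤ 1)
    (hstat : (colSub X S)ᵀ *ᵥ (W *ᵥ (Y - colSub X S *ᵥ βh)) = c • v) :
    vinf ((colSub X Sᶜ)ᵀ *ᵥ (W *ᵥ (Y - colSub X S *ᵥ βh))) ≤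
      (1 + ψ) * vinf (Xᵀ *ᵥ (W *ᵥ ε)) + c * ψ := by
  have hres : Y - colSub X S *ᵥ βh = colSub X S *ᵥ (βS - βh) + ε := by
    rw [hY, mulVec_sub]; abel
  rw [hres, mulVec_mulVec] at hstat ⊢
  rw [mulVec_residual_eq_of_stationary _ _ _ _ _ _ hinv hstat, hψ, rowSumNorm_eq_linfty_opNorm,
    vinf_eq_norm, vinf_eq_norm]
  rw [vinf_eq_norm] at hv
  set E := ‖Xᵀ *ᵥ (W *ᵥ ε)‖
  have hεS : ‖((colSub X S)ᵀ * W) *ᵥ ε‖ ≤ E := by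
    rw [← mulVec_mulVec]; exact norm_colSub_transpose_mulVec_le X S _
  have hεSc : ‖((colSub X Sᶜ)ᵀ * W) *ᵥ ε‖ ≤ E := by
    rw [← mulVec_mulVec]; exact norm_colSub_transpose_mulVec_le X Sᶜ _
  have hcv : ‖c • v‖ ≤ c := by
    rw [norm_smul, Real.norm_of_nonneg hc]; exact mul_le_of_le_one_right hc hv
  have hdiff : ‖c • v - ((colSub X S)ᵀ * W) *ᵥ ε‖ ≤ c + E := norm_sub_le_of_le hcv hεS
  calc _ ≤ _ * (c + E) + E :=
        norm_add_le_of_le ((linfty_opNorm_mulVec _ _).trans (by gcongr)) hεSc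
    _ = _ := by ring

/-- Inequality (S1.tnorm) in the proof of Theorem 1, part 2: if `β̂_S` solves the
stationarity equation `X_S^⊤ W (Y − X_S β̂_S) = c v` with `c ≥ 0` and `‖v‖_∞ ≤ 1`, then
`‖X_{S^c}^⊤ W (Y − X_S β̂_S)‖_∞ ≤ (1 + ψ)‖X^⊤ W ε‖_∞ + c ψ`. -/
theorem stationary_residual_inf_norm_bound
    (n p : ℕ) (X : Matrix (Fin n) (Fin p) ℝ)
    (W : Matrix (Fin n) (Fin n) ℝ)
    (hWdiag : W.IsDiag) (hWnonneg : ∀ i, 0 ≤ W i i)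
    (S : Finset (Fin p)) (βS : {j // j ∈ S} → ℝ) (ε : Fin n → ℝ)
    (Y : Fin n → ℝ) (hY : Y = (colSub X S) *ᵥ βS + ε)
    (hinv : IsUnit ((colSub X S)ᵀ * W * colSub X S).det)
    (ψ : ℝ)
    (hψ : ψ = rowSumNorm
      ((colSub X Sᶜ)ᵀ * W * colSub X S * ((colSub X S)ᵀ * W * colSub X S)⁻¹))
    (βh : {j // j ∈ S} → ℝ) (c : ℝ) (hc : 0 ≤ c)
    (v : {j // j ∈ S} → ℝ) (hv : vinf v ≤ 1)
    (hstat : (colSub X S)ᵀ *ᵥ (W *ᵥ (Y - colSub X S *ᵥ βh)) = c • v) :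
    vinf ((colSub X Sᶜ)ᵀ *ᵥ (W *ᵥ (Y - colSub X S *ᵥ βh))) ≤
      (1 + ψ) * vinf (Xᵀ *ᵥ (W *ᵥ ε)) + c * ψ :=
  stationary_residual_inf_norm_bound_general n p X W S βS ε Y hY hinv ψ hψ βh c hc v hv hstat
end
end
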